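/- arXiv:2305.13166 — 7 statements merged into one kernel-verified Lean document; each statement's English description precedes it below -/
import Mathlib

section
/- Let d ≥ 1 and set CG(2d,ℝ) := GL(2d,ℝ) × Sym(2d,ℝ) × Sp(d,ℝ). Define α(E,C,S) := 𝒟_{E^{−1}} · V_C · V_Lᵀ · Lift(S), a 4d×4d real matrix. Then α is a bijection from CG(2d,ℝ) onto Sp_inv(2d,ℝ), the set of shift-invertible matrices of Sp(2d,ℝ). -/
open Matrix

/-- Index type for `2d × 2d` matrices, viewed as two `d`-blocks. -/
abbrev I2 (d : ℕ) := Fin d ⊕ Fin d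

/-- Index type for `4d × 4d` matrices, viewed as four `d`-blocks. -/
abbrev I4 (d : ℕ) := I2 d ⊕ I2 d

/-- The standard symplectic matrix `J = [[0, I], [-I, 0]]`. -/
def symplJ (α : Type*) [Fintype α] [DecidableEq α] : Matrix (α ⊕ α) (α ⊕ α) ℝ :=
  fromBlocks 0 1 (-1) 0

/-- `A` is symplectic if `Aᵀ J A = J`. -/
def IsSymplectic {α : Type*} [Fintype α] [DecidableEq α]
    (A : Matrix (α ⊕ α) (α ⊕ α) ℝ) : Prop :=
  Aᵀ * symplJ α * A = symplJ α

/-- Embedding of the "odd" block columns (blocks 1 and 3) of a `4d×4d` matrix. -/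
def colOdd (d : ℕ) : I2 d → I4 d :=
  Sum.elim (fun i => Sum.inl (Sum.inl i)) (fun i => Sum.inr (Sum.inl i))

/-- Embedding of the "even" block columns (blocks 2 and 4) of a `4d×4d` matrix. -/
def colEven (d : ℕ) : I2 d → I4 d :=
  Sum.elim (fun i => Sum.inl (Sum.inr i)) (fun i => Sum.inr (Sum.inr i))

/-- `E_𝒜 = [[A₁₁, A₁₃], [A₂₁, A₂₃]]`. -/
def subE {d : ℕ} (A : Matrix (I4 d) (I4 d) ℝ) : Matrix (I2 d) (I2 d) ℝ :=
  A.submatrix Sum.inl (colOdd d)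

/-- `ℰ_𝒜 = [[A₁₂, A₁₄], [A₂₂, A₂₄]]`. -/
def subEE {d : ℕ} (A : Matrix (I4 d) (I4 d) ℝ) : Matrix (I2 d) (I2 d) ℝ :=
  A.submatrix Sum.inl (colEven d)

/-- `F_𝒜 = [[A₃₁, A₃₃], [A₄₁, A₄₃]]`. -/
def subF {d : ℕ} (A : Matrix (I4 d) (I4 d) ℝ) : Matrix (I2 d) (I2 d) ℝ :=
  A.submatrix Sum.inr (colOdd d)

/-- `ℱ_𝒜 = [[A₃₂, A₃₄], [A₄₂, A₄₄]]`. -/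
def subFF {d : ℕ} (A : Matrix (I4 d) (I4 d) ℝ) : Matrix (I2 d) (I2 d) ℝ :=
  A.submatrix Sum.inr (colEven d)

/-- Row/column embedding of the `i`-th `d`-block (i = 1,2,3,4). -/
def r1 (d : ℕ) : Fin d → I4 d := fun i => Sum.inl (Sum.inl i)
def r2 (d : ℕ) : Fin d → I4 d := fun i => Sum.inl (Sum.inr i)
def r3 (d : ℕ) : Fin d → I4 d := fun i => Sum.inr (Sum.inl i)
def r4 (d : ℕ) : Fin d → I4 d := fun i => Sum.inr (Sum.inr i)

/-- The `d×d` block `A_{ij}` of a `4d×4d` matrix, given the row and column embeddings. -/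
def blk {d : ℕ} (A : Matrix (I4 d) (I4 d) ℝ) (ri cj : Fin d → I4 d) :
    Matrix (Fin d) (Fin d) ℝ :=
  A.submatrix ri cj

/-- The symmetric matrix `M_𝒜` associated with a symplectic `4d×4d` matrix `𝒜`. -/
def Mmat {d : ℕ} (A : Matrix (I4 d) (I4 d) ℝ) : Matrix (I2 d) (I2 d) ℝ :=
  fromBlocks
    ((blk A (r1 d) (r1 d))ᵀ * blk A (r3 d) (r1 d) + (blk A (r2 d) (r1 d))ᵀ * blk A (r4 d) (r1 d))
    ((blk A (r3 d) (r1 d))ᵀ * blk A (r1 d) (r3 d) + (blk A (r4 d) (r1 d))ᵀ * blk A (r2 d) (r3 d))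
    ((blk A (r1 d) (r3 d))ᵀ * blk A (r3 d) (r1 d) + (blk A (r2 d) (r3 d))ᵀ * blk A (r4 d) (r1 d))
    ((blk A (r1 d) (r3 d))ᵀ * blk A (r3 d) (r3 d) + (blk A (r2 d) (r3 d))ᵀ * blk A (r4 d) (r3 d))

/-- `𝒟_E = [[E⁻¹, 0], [0, Eᵀ]]`. -/
noncomputable def Dmat {α : Type*} [Fintype α] [DecidableEq α] (E : Matrix α α ℝ) :
    Matrix (α ⊕ α) (α ⊕ α) ℝ :=
  fromBlocks E⁻¹ 0 0 Eᵀ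

/-- `V_C = [[I, 0], [C, I]]`. -/
def Vmat {α : Type*} [Fintype α] [DecidableEq α] (C : Matrix α α ℝ) :
    Matrix (α ⊕ α) (α ⊕ α) ℝ :=
  fromBlocks 1 0 C 1

/-- `L = [[0, I], [I, 0]]` (`2d × 2d`). -/
def Lmat (d : ℕ) : Matrix (I2 d) (I2 d) ℝ :=
  fromBlocks 0 1 1 0

/-- `Lift(G)`: the `4d×4d` matrix with block rows `[I,0,0,0]`, `[0,G₁₁,0,G₁₂]`,
`[0,0,I,0]`, `[0,G₂₁,0,G₂₂]`. -/
def Lift {d : ℕ} (G : Matrix (I2 d) (I2 d) ℝ) : Matrix (I4 d) (I4 d) ℝ :=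
  fromBlocks
    (fromBlocks 1 0 0 (G.submatrix Sum.inl Sum.inl))
    (fromBlocks 0 0 0 (G.submatrix Sum.inl Sum.inr))
    (fromBlocks 0 0 0 (G.submatrix Sum.inr Sum.inl))
    (fromBlocks 1 0 0 (G.submatrix Sum.inr Sum.inr))
section Helpers

open Matrix

variable {d : ℕ}

/-- `j`, the small standard symplectic matrix (`2d × 2d`). -/
noncomputable abbrev jd (d : ℕ) : Matrix (I2 d) (I2 d) ℝ := symplJ (Fin d)

/-- `K = [[0,1],[0,0]]`. -/
def Kmat (d : ℕ) : Matrix (I2 d) (I2 d) ℝ := fromBlocks 0 1 0 0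

/-- `M = [[0,0],[0,1]]`. -/
def Mmat2 (d : ℕ) : Matrix (I2 d) (I2 d) ℝ := fromBlocks 0 0 0 1

/-- The shuffle permutation on `I4 d` (an involution). -/
def sig (d : ℕ) : I4 d ≃ I4 d where
  toFun := Sum.elim (colOdd d) (colEven d)
  invFun := Sum.elim (colOdd d) (colEven d)
  left_inv := by rintro ((i | i) | (i | i)) <;> rfl
  right_inv := by rintro ((i | i) | (i | i)) <;> rfl

lemma sig_sig (x : I4 d) : sig d (sig d x) = x := by
  rcases x with ((i | i) | (i | i)) <;> rfl

lemma submatrix_sig_sig (A : Matrix (I4 d) (I4 d) ℝ) :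
    (A.submatrix ⇑(sig d) ⇑(sig d)).submatrix ⇑(sig d) ⇑(sig d) = A := by
  ext i j
  simp [sig_sig]

lemma submatrix_id_sig_id_sig (A : Matrix (I4 d) (I4 d) ℝ) :
    (A.submatrix id ⇑(sig d)).submatrix id ⇑(sig d) = A := by
  ext i j
  simp [sig_sig]

lemma phi_inj {A B : Matrix (I4 d) (I4 d) ℝ}
    (h : A.submatrix ⇑(sig d) ⇑(sig d) = B.submatrix ⇑(sig d) ⇑(sig d)) : A = B := by
  have := congrArg (fun X : Matrix (I4 d) (I4 d) ℝ => X.submatrix ⇑(sig d) ⇑(sig d)) h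
  simpa only [submatrix_sig_sig] using this

lemma colsub_inj {A B : Matrix (I4 d) (I4 d) ℝ}
    (h : A.submatrix id ⇑(sig d) = B.submatrix id ⇑(sig d)) : A = B := by
  have := congrArg (fun X : Matrix (I4 d) (I4 d) ℝ => X.submatrix id ⇑(sig d)) h
  simpa only [submatrix_id_sig_id_sig] using this

lemma mul_submatrix_id (X Y : Matrix (I4 d) (I4 d) ℝ) (g : I4 d → I4 d) :
    X * Y.submatrix id g = (X * Y).submatrix id g := by
  ext i j
  simp [Matrix.mul_apply]

lemma submatrix_id_mul (X Y : Matrix (I4 d) (I4 d) ℝ) (f : I4 d → I4 d) :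
    X.submatrix f id * Y = (X * Y).submatrix f id := by
  ext i j
  simp [Matrix.mul_apply]

/-- Column shuffle of a matrix written via `subE, subEE, subF, subFF`. -/
lemma submatrix_sig (A : Matrix (I4 d) (I4 d) ℝ) :
    A.submatrix id ⇑(sig d) = fromBlocks (subE A) (subEE A) (subF A) (subFF A) := by
  ext i j
  rcases i with a | a <;> rcases j with b | b <;> rfl

lemma lift_phi (S : Matrix (I2 d) (I2 d) ℝ) :
    (Lift S).submatrix ⇑(sig d) ⇑(sig d) = fromBlocks 1 0 0 S := by
  ext i j
  rcases i with (a | a) | (a | a) <;> rcases j with (b | b) | (b | b) <;>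
    simp [Lift, sig, colOdd, colEven, Matrix.one_apply]

lemma VLT_sub :
    ((Vmat (Lmat d))ᵀ).submatrix id ⇑(sig d) =
      fromBlocks 1 (Lmat d) (Kmat d) (Mmat2 d) := by
  ext i j
  rcases i with a | a <;> rcases j with (b | b) | (b | b) <;>
    rcases a with a | a <;>
    simp [Vmat, Lmat, Kmat, Mmat2, sig, colOdd, colEven, Matrix.one_apply, eq_comm]

lemma J_phi :
    (symplJ (I2 d)).submatrix ⇑(sig d) ⇑(sig d) = fromBlocks (jd d) 0 0 (jd d) := by
  ext i j
  rcases i with (a | a) | (a | a) <;> rcases j with (b | b) | (b | b) <;>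
    simp [symplJ, sig, colOdd, colEven, Matrix.one_apply]

end Helpers
section Helpers2

open Matrix

variable {d : ℕ}

lemma L_mul_L : Lmat d * Lmat d = 1 := by
  simp [Lmat, Matrix.fromBlocks_multiply, ← Matrix.fromBlocks_one]

lemma L_transpose : (Lmat d)ᵀ = Lmat d := by
  simp [Lmat, Matrix.fromBlocks_transpose]

lemma K_sub_Kt : Kmat d - (Kmat d)ᵀ = jd d := by
  simp [Kmat, symplJ, Matrix.fromBlocks_transpose]
  ext i j
  rcases i with i | i <;> rcases j with j | j <;> simp [Matrix.fromBlocks, Matrix.sub_apply]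

lemma Kt_mul_L : (Kmat d)ᵀ * Lmat d = Mmat2 d := by
  simp [Kmat, Lmat, Mmat2, Matrix.fromBlocks_transpose, Matrix.fromBlocks_multiply]

lemma L_j_L : Lmat d * jd d * Lmat d = -(jd d) := by
  simp [Lmat, symplJ, Matrix.fromBlocks_multiply]
  ext i j
  rcases i with i | i <;> rcases j with j | j <;> simp [Matrix.fromBlocks]

lemma J_mul_J {α : Type*} [Fintype α] [DecidableEq α] :
    symplJ α * symplJ α = -1 := by
  simp [symplJ, Matrix.fromBlocks_multiply]
  ext i j
  rcases i with i | i <;> rcases j with j | j <;>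
    simp [Matrix.fromBlocks, Matrix.one_apply]

lemma isSymp_mul {α : Type*} [Fintype α] [DecidableEq α]
    {A B : Matrix (α ⊕ α) (α ⊕ α) ℝ} (hA : IsSymplectic A) (hB : IsSymplectic B) :
    IsSymplectic (A * B) := by
  unfold IsSymplectic at *
  calc (A * B)ᵀ * symplJ α * (A * B) = Bᵀ * (Aᵀ * symplJ α * A) * B := by
        rw [Matrix.transpose_mul]; noncomm_ring
    _ = symplJ α := by rw [hA, hB]

lemma isSymp_transpose {α : Type*} [Fintype α] [DecidableEq α]
    {A : Matrix (α ⊕ α) (α ⊕ α) ℝ} (hA : IsSymplectic A) : IsSymplectic Aᵀ := by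
  unfold IsSymplectic at *
  set J := symplJ α with hJ
  have hJJ : J * -J = 1 := by rw [mul_neg, J_mul_J, neg_neg]
  have hBA : (-J * Aᵀ * J) * A = 1 := by
    calc (-J * Aᵀ * J) * A = -J * (Aᵀ * J * A) := by noncomm_ring
      _ = -J * J := by rw [hA]
      _ = 1 := by rw [neg_mul, J_mul_J, neg_neg]
  have hAB : A * (-J * Aᵀ * J) = 1 := mul_eq_one_comm.mp hBA
  have h5 : -(A * J * Aᵀ * J) = 1 := by rw [← hAB]; noncomm_ring
  have h4 : A * J * Aᵀ * J = -1 := neg_eq_iff_eq_neg.mp h5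
  rw [Matrix.transpose_transpose]
  calc A * J * Aᵀ = A * J * Aᵀ * (J * -J) := by rw [hJJ, mul_one]
    _ = (A * J * Aᵀ * J) * -J := by noncomm_ring
    _ = (-1 : Matrix (α ⊕ α) (α ⊕ α) ℝ) * -J := by rw [h4]
    _ = J := by simp

lemma isSymp_D {α : Type*} [Fintype α] [DecidableEq α]
    (E : Matrix α α ℝ) (hE : IsUnit E) : IsSymplectic (Dmat E) := by
  have hdet : IsUnit E.det := (Matrix.isUnit_iff_isUnit_det E).mp hE
  have hdetT : IsUnit Eᵀ.det := by rwa [Matrix.det_transpose]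
  unfold IsSymplectic Dmat symplJ
  simp [Matrix.fromBlocks_transpose, Matrix.fromBlocks_multiply,
    Matrix.transpose_nonsing_inv, Matrix.nonsing_inv_mul _ hdetT,
    Matrix.mul_nonsing_inv _ hdet]

lemma isSymp_V {α : Type*} [Fintype α] [DecidableEq α]
    (C : Matrix α α ℝ) (hC : C.IsSymm) : IsSymplectic (Vmat C) := by
  have hC' : Cᵀ = C := hC
  unfold IsSymplectic Vmat symplJ
  simp [Matrix.fromBlocks_transpose, Matrix.fromBlocks_multiply, hC']

end Helpers2
section Helpers3

open Matrix

variable {d : ℕ}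

lemma conj_sig (A : Matrix (I4 d) (I4 d) ℝ) :
    (A.submatrix id ⇑(sig d))ᵀ * symplJ (I2 d) * (A.submatrix id ⇑(sig d)) =
      (Aᵀ * symplJ (I2 d) * A).submatrix ⇑(sig d) ⇑(sig d) := by
  rw [Matrix.transpose_submatrix, submatrix_id_mul, mul_submatrix_id, submatrix_id_mul,
    Matrix.submatrix_submatrix]
  rfl

lemma isSymp_iff_N (A : Matrix (I4 d) (I4 d) ℝ) :
    IsSymplectic A ↔
      (A.submatrix id ⇑(sig d))ᵀ * symplJ (I2 d) * (A.submatrix id ⇑(sig d)) =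
        fromBlocks (jd d) 0 0 (jd d) := by
  rw [conj_sig]
  constructor
  · intro h
    rw [IsSymplectic] at h
    rw [h, J_phi]
  · intro h
    rw [← J_phi] at h
    exact phi_inj h

lemma conj_sig' (A : Matrix (I4 d) (I4 d) ℝ) :
    (A.submatrix ⇑(sig d) ⇑(sig d))ᵀ * (fromBlocks (jd d) 0 0 (jd d)) *
        (A.submatrix ⇑(sig d) ⇑(sig d)) =
      (Aᵀ * symplJ (I2 d) * A).submatrix ⇑(sig d) ⇑(sig d) := by
  rw [← J_phi, Matrix.transpose_submatrix,
    Matrix.submatrix_mul_equiv Aᵀ (symplJ (I2 d)) ⇑(sig d) (sig d) ⇑(sig d),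
    Matrix.submatrix_mul_equiv (Aᵀ * symplJ (I2 d)) A ⇑(sig d) (sig d) ⇑(sig d)]

lemma isSymp_iff_phi (A : Matrix (I4 d) (I4 d) ℝ) :
    IsSymplectic A ↔
      (A.submatrix ⇑(sig d) ⇑(sig d))ᵀ * (fromBlocks (jd d) 0 0 (jd d)) *
          (A.submatrix ⇑(sig d) ⇑(sig d)) = fromBlocks (jd d) 0 0 (jd d) := by
  rw [conj_sig']
  constructor
  · intro h
    rw [IsSymplectic] at h
    rw [h, J_phi]
  · intro h
    rw [← J_phi] at h
    exact phi_inj h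

lemma isSymp_lift {S : Matrix (I2 d) (I2 d) ℝ} (hS : IsSymplectic S) :
    IsSymplectic (Lift S) := by
  rw [isSymp_iff_phi, lift_phi]
  rw [IsSymplectic] at hS
  simp [Matrix.fromBlocks_transpose, Matrix.fromBlocks_multiply, hS]

lemma N_alpha (E C S : Matrix (I2 d) (I2 d) ℝ) (hE : IsUnit E) :
    (Dmat E⁻¹ * Vmat C * (Vmat (Lmat d))ᵀ * Lift S).submatrix id ⇑(sig d) =
      fromBlocks E (E * (Lmat d * S)) (Eᵀ⁻¹ * (C + Kmat d))
        (Eᵀ⁻¹ * ((C * Lmat d + Mmat2 d) * S)) := by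
  have hdet : IsUnit E.det := (Matrix.isUnit_iff_isUnit_det E).mp hE
  have h2 : ((Vmat (Lmat d))ᵀ * Lift S).submatrix id ⇑(sig d) =
      fromBlocks 1 (Lmat d) (Kmat d) (Mmat2 d) * fromBlocks 1 0 0 S := by
    rw [← Matrix.submatrix_mul_equiv (Vmat (Lmat d))ᵀ (Lift S) id (sig d) ⇑(sig d),
      VLT_sub, lift_phi]
  have h3 : Dmat E⁻¹ * Vmat C = fromBlocks E 0 (Eᵀ⁻¹ * C) Eᵀ⁻¹ := by
    simp [Dmat, Vmat, Matrix.fromBlocks_multiply,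
      Matrix.nonsing_inv_nonsing_inv _ hdet, Matrix.transpose_nonsing_inv]
  rw [mul_assoc (Dmat E⁻¹ * Vmat C), ← mul_submatrix_id, h2, h3]
  rw [Matrix.fromBlocks_multiply, Matrix.fromBlocks_multiply, Matrix.fromBlocks_inj]
  refine ⟨by noncomm_ring, by noncomm_ring, by noncomm_ring, by noncomm_ring⟩

end Helpers3

/-- The map `α(E,C,S) = 𝒟_{E⁻¹} · V_C · V_Lᵀ · Lift(S)` is a bijection from
`CG(2d,ℝ) = GL(2d,ℝ) × Sym(2d,ℝ) × Sp(d,ℝ)` onto the set `Sp_inv(2d,ℝ)` of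
shift-invertible symplectic matrices. -/
theorem alpha_bijOn (d : ℕ) (hd : 1 ≤ d) :
    Set.BijOn
      (fun ECS : Matrix (I2 d) (I2 d) ℝ × Matrix (I2 d) (I2 d) ℝ × Matrix (I2 d) (I2 d) ℝ =>
        Dmat ECS.1⁻¹ * Vmat ECS.2.1 * (Vmat (Lmat d))ᵀ * Lift ECS.2.2)
      {ECS | IsUnit ECS.1 ∧ ECS.2.1.IsSymm ∧ IsSymplectic ECS.2.2}
      {𝒜 | IsSymplectic 𝒜 ∧ IsUnit (subE 𝒜)} := by
  refine ⟨?_, ?_, ?_⟩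
  · -- MapsTo
    rintro ⟨E, C, S⟩ ⟨hE, hC, hS⟩
    have hdet : IsUnit E.det := (Matrix.isUnit_iff_isUnit_det E).mp hE
    have hEinv : IsUnit E⁻¹ :=
      Matrix.isUnit_nonsing_inv_iff.mpr hE
    have hLsymm : (Lmat d).IsSymm := L_transpose
    show IsSymplectic (Dmat E⁻¹ * Vmat C * (Vmat (Lmat d))ᵀ * Lift S) ∧
      IsUnit (subE (Dmat E⁻¹ * Vmat C * (Vmat (Lmat d))ᵀ * Lift S))
    constructor
    · exact isSymp_mul (isSymp_mul (isSymp_mul (isSymp_D _ hEinv) (isSymp_V _ hC))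
        (isSymp_transpose (isSymp_V _ hLsymm))) (isSymp_lift hS)
    · have hh := (submatrix_sig (Dmat E⁻¹ * Vmat C * (Vmat (Lmat d))ᵀ * Lift S)).symm.trans
        (N_alpha E C S hE)
      have h11 := congrArg Matrix.toBlocks₁₁ hh
      simp only [Matrix.toBlocks_fromBlocks₁₁] at h11
      rw [h11]; exact hE
  · -- InjOn
    rintro ⟨E, C, S⟩ ⟨hE, hC, hS⟩ ⟨E', C', S'⟩ ⟨hE', hC', hS'⟩ h
    simp only at h
    have hN := congrArg (fun X : Matrix (I4 d) (I4 d) ℝ => X.submatrix id ⇑(sig d)) h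
    rw [N_alpha E C S hE, N_alpha E' C' S' hE'] at hN
    have h11 := congrArg Matrix.toBlocks₁₁ hN
    have h12 := congrArg Matrix.toBlocks₁₂ hN
    have h21 := congrArg Matrix.toBlocks₂₁ hN
    simp only [Matrix.toBlocks_fromBlocks₁₁, Matrix.toBlocks_fromBlocks₁₂,
      Matrix.toBlocks_fromBlocks₂₁] at h11 h12 h21
    subst h11
    have hdet : IsUnit E.det := (Matrix.isUnit_iff_isUnit_det E).mp hE
    have hdetT : IsUnit Eᵀ.det := by rwa [Matrix.det_transpose]
    have hCC : C = C' := by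
      have h' := congrArg (fun X => Eᵀ * X) h21
      simp only [← mul_assoc, Matrix.mul_nonsing_inv _ hdetT, one_mul] at h'
      exact add_right_cancel h'
    have hSS : S = S' := by
      have h' := congrArg (fun X => Lmat d * (E⁻¹ * X)) h12
      simp only [← mul_assoc, Matrix.nonsing_inv_mul _ hdet, one_mul, L_mul_L] at h'
      exact h'
    rw [hCC, hSS]
  · -- SurjOn
    rintro 𝒜 ⟨hsymp, hEu⟩
    set E := subE 𝒜 with hEdef
    set Ee := subEE 𝒜 with hEedef
    set F := subF 𝒜 with hFdef
    set Ff := subFF 𝒜 with hFfdef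
    have hdet : IsUnit E.det := (Matrix.isUnit_iff_isUnit_det E).mp hEu
    have hdetT : IsUnit Eᵀ.det := by rwa [Matrix.det_transpose]
    have hc1 : ∀ X : Matrix (I2 d) (I2 d) ℝ, Eᵀ⁻¹ * (Eᵀ * X) = X := fun X => by
      rw [← mul_assoc, Matrix.nonsing_inv_mul _ hdetT, one_mul]
    have hc2 : ∀ X : Matrix (I2 d) (I2 d) ℝ, E * (E⁻¹ * X) = X := fun X => by
      rw [← mul_assoc, Matrix.mul_nonsing_inv _ hdet, one_mul]
    have hN𝒜 : 𝒜.submatrix id ⇑(sig d) = fromBlocks E Ee F Ff := submatrix_sig 𝒜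
    have hrel := (isSymp_iff_N 𝒜).mp hsymp
    rw [hN𝒜] at hrel
    have hexp : (fromBlocks E Ee F Ff)ᵀ * symplJ (I2 d) * (fromBlocks E Ee F Ff) =
        fromBlocks (Eᵀ * F - Fᵀ * E) (Eᵀ * Ff - Fᵀ * Ee)
          (Eeᵀ * F - Ffᵀ * E) (Eeᵀ * Ff - Ffᵀ * Ee) := by
      rw [Matrix.fromBlocks_transpose]
      simp only [symplJ]
      rw [Matrix.fromBlocks_multiply, Matrix.fromBlocks_multiply, Matrix.fromBlocks_inj]
      exact ⟨by noncomm_ring, by noncomm_ring, by noncomm_ring, by noncomm_ring⟩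
    rw [hexp] at hrel
    have h1 := congrArg Matrix.toBlocks₁₁ hrel
    have h2 := congrArg Matrix.toBlocks₁₂ hrel
    have h3 := congrArg Matrix.toBlocks₂₁ hrel
    have h4 := congrArg Matrix.toBlocks₂₂ hrel
    simp only [Matrix.toBlocks_fromBlocks₁₁, Matrix.toBlocks_fromBlocks₁₂,
      Matrix.toBlocks_fromBlocks₂₁, Matrix.toBlocks_fromBlocks₂₂] at h1 h2 h3 h4
    -- h1 : Eᵀ*F - Fᵀ*E = jd d ; h2 : Eᵀ*Ff - Fᵀ*Ee = 0 ; h3 : Eeᵀ*F - Ffᵀ*E = 0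
    -- h4 : Eeᵀ*Ff - Ffᵀ*Ee = jd d
    have hFE : Fᵀ * Ee = Eᵀ * Ff := (sub_eq_zero.mp h2).symm
    have hEF : Eeᵀ * F = Ffᵀ * E := sub_eq_zero.mp h3
    have key : Eᵀ⁻¹ * jd d * E⁻¹ = F * E⁻¹ - Eᵀ⁻¹ * Fᵀ := by
      calc Eᵀ⁻¹ * jd d * E⁻¹ = Eᵀ⁻¹ * (Eᵀ * F - Fᵀ * E) * E⁻¹ := by rw [h1]
        _ = Eᵀ⁻¹ * (Eᵀ * (F * E⁻¹)) - Eᵀ⁻¹ * Fᵀ * (E * E⁻¹) := by noncomm_ring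
        _ = F * E⁻¹ - Eᵀ⁻¹ * Fᵀ := by
            rw [Matrix.mul_nonsing_inv _ hdet, hc1, mul_one]
    refine ⟨⟨E, Eᵀ * F - Kmat d, Lmat d * (E⁻¹ * Ee)⟩, ⟨hEu, ?_, ?_⟩, ?_⟩
    · -- C symmetric
      show (Eᵀ * F - Kmat d)ᵀ = Eᵀ * F - Kmat d
      rw [Matrix.transpose_sub, Matrix.transpose_mul, Matrix.transpose_transpose]
      have hFtE : Fᵀ * E = Eᵀ * F - jd d := by rw [← h1]; abel
      rw [hFtE, ← K_sub_Kt]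
      abel
    · -- S symplectic
      show (Lmat d * (E⁻¹ * Ee))ᵀ * symplJ (Fin d) * (Lmat d * (E⁻¹ * Ee)) = symplJ (Fin d)
      have hSt : (Lmat d * (E⁻¹ * Ee))ᵀ = Eeᵀ * Eᵀ⁻¹ * Lmat d := by
        rw [Matrix.transpose_mul, Matrix.transpose_mul, L_transpose,
          Matrix.transpose_nonsing_inv]
      rw [hSt]
      calc Eeᵀ * Eᵀ⁻¹ * Lmat d * symplJ (Fin d) * (Lmat d * (E⁻¹ * Ee))
          = Eeᵀ * (Eᵀ⁻¹ * (Lmat d * jd d * Lmat d) * E⁻¹) * Ee := by noncomm_ring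
        _ = -(Eeᵀ * (Eᵀ⁻¹ * jd d * E⁻¹) * Ee) := by rw [L_j_L]; noncomm_ring
        _ = -(Eeᵀ * (F * E⁻¹ - Eᵀ⁻¹ * Fᵀ) * Ee) := by rw [key]
        _ = Eeᵀ * (Eᵀ⁻¹ * (Fᵀ * Ee)) - Eeᵀ * F * (E⁻¹ * Ee) := by noncomm_ring
        _ = Eeᵀ * (Eᵀ⁻¹ * (Eᵀ * Ff)) - Ffᵀ * E * (E⁻¹ * Ee) := by rw [hFE, hEF]
        _ = Eeᵀ * Ff - Ffᵀ * Ee := by rw [hc1, mul_assoc, hc2]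
        _ = symplJ (Fin d) := h4
    · -- α(E, C, S) = 𝒜
      show Dmat E⁻¹ * Vmat (Eᵀ * F - Kmat d) * (Vmat (Lmat d))ᵀ *
          Lift (Lmat d * (E⁻¹ * Ee)) = 𝒜
      apply colsub_inj
      rw [N_alpha E (Eᵀ * F - Kmat d) (Lmat d * (E⁻¹ * Ee)) hEu, hN𝒜, Matrix.fromBlocks_inj]
      refine ⟨rfl, ?_, ?_, ?_⟩
      · calc E * (Lmat d * (Lmat d * (E⁻¹ * Ee)))
            = E * ((Lmat d * Lmat d) * (E⁻¹ * Ee)) := by noncomm_ring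
          _ = E * (E⁻¹ * Ee) := by rw [L_mul_L, one_mul]
          _ = Ee := hc2 _
      · rw [show Eᵀ * F - Kmat d + Kmat d = Eᵀ * F by abel]
        exact hc1 F
      · have hCL : (Eᵀ * F - Kmat d) * Lmat d + Mmat2 d = (Eᵀ * F - jd d) * Lmat d := by
          rw [← Kt_mul_L, ← K_sub_Kt]
          noncomm_ring
        calc Eᵀ⁻¹ * (((Eᵀ * F - Kmat d) * Lmat d + Mmat2 d) * (Lmat d * (E⁻¹ * Ee)))
            = Eᵀ⁻¹ * ((Eᵀ * F - jd d) * Lmat d * (Lmat d * (E⁻¹ * Ee))) := by rw [hCL]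
          _ = Eᵀ⁻¹ * ((Eᵀ * F - jd d) * ((Lmat d * Lmat d) * (E⁻¹ * Ee))) := by noncomm_ring
          _ = Eᵀ⁻¹ * ((Eᵀ * F - jd d) * (E⁻¹ * Ee)) := by rw [L_mul_L, one_mul]
          _ = Eᵀ⁻¹ * (Eᵀ * (F * (E⁻¹ * Ee))) - Eᵀ⁻¹ * jd d * E⁻¹ * Ee := by noncomm_ring
          _ = F * (E⁻¹ * Ee) - (F * E⁻¹ - Eᵀ⁻¹ * Fᵀ) * Ee := by rw [hc1, key]
          _ = Eᵀ⁻¹ * (Fᵀ * Ee) := by noncomm_ring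
          _ = Eᵀ⁻¹ * (Eᵀ * Ff) := by rw [hFE]
          _ = Ff := hc1 _
end

section
/- Let d ≥ 1, E ∈ GL(2d,ℝ), C ∈ Sym(2d,ℝ) and S ∈ Sp(d,ℝ), and set 𝒜 := 𝒟_{E^{−1}} · V_C · V_Lᵀ · Lift(S). Then 𝒜 ∈ Sp(2d,ℝ), its submatrices satisfy E_𝒜 = E and ℰ_𝒜 = E·L·S; in particular 𝒜 is shift-invertible and L·E_𝒜^{−1}·ℰ_𝒜 = S. -/
open Matrix

/-! The three factors `𝒟_{E⁻¹}`, `V_C`, `V_Lᵀ` are symplectic by direct block computation, and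
`Lift(S)` is symplectic because its `J`-form splits into that of the identity and that of `S`.
For the blocks: `Lift(G)` fixes the odd block columns and multiplies the even ones by `G`, while
the top block row of `𝒟_{E⁻¹} V_C V_Lᵀ` is `[E, E L]`; as `L` swaps the two column halves of `E`,
its odd columns form `E` and its even columns `E L`. -/

section Symplectic

variable {α : Type*} [Fintype α] [DecidableEq α]

theorem IsSymplectic.mul {A B : Matrix (α ⊕ α) (α ⊕ α) ℝ}
    (hA : IsSymplectic A) (hB : IsSymplectic B) : IsSymplectic (A * B) := by
  unfold IsSymplectic at *
  calc (A * B)ᵀ * symplJ α * (A * B) = Bᵀ * (Aᵀ * symplJ α * A) * B := by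
        simp only [transpose_mul, Matrix.mul_assoc]
    _ = symplJ α := by rw [hA, hB]

theorem isSymplectic_Dmat {E : Matrix α α ℝ} (hE : IsUnit E) : IsSymplectic (Dmat E) := by
  have hdet : IsUnit E.det := (isUnit_iff_isUnit_det E).1 hE
  simp [IsSymplectic, Dmat, symplJ, fromBlocks_transpose, fromBlocks_multiply,
    ← transpose_mul, mul_nonsing_inv _ hdet]

theorem isSymplectic_Vmat {C : Matrix α α ℝ} (hC : C.IsSymm) : IsSymplectic (Vmat C) := by
  simp [IsSymplectic, Vmat, symplJ, fromBlocks_transpose, fromBlocks_multiply, hC.eq]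

theorem isSymplectic_Vmat_transpose {C : Matrix α α ℝ} (hC : C.IsSymm) :
    IsSymplectic (Vmat C)ᵀ := by
  simp [IsSymplectic, Vmat, symplJ, fromBlocks_transpose, fromBlocks_multiply, hC.eq]

theorem Dmat_inv_mul_Vmat_mul_Vmat_transpose {E : Matrix α α ℝ} (hE : IsUnit E)
    (C : Matrix α α ℝ) {L : Matrix α α ℝ} (hL : L.IsSymm) :
    Dmat E⁻¹ * Vmat C * (Vmat L)ᵀ
      = fromBlocks E (E * L) (E⁻¹ᵀ * C) (E⁻¹ᵀ * C * L + E⁻¹ᵀ) := by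
  simp [Dmat, Vmat, fromBlocks_transpose, fromBlocks_multiply,
    nonsing_inv_nonsing_inv E ((isUnit_iff_isUnit_det E).1 hE), hL.eq]

end Symplectic

theorem isSymm_Lmat (d : ℕ) : (Lmat d).IsSymm := by
  simp [Matrix.IsSymm, Lmat, fromBlocks_transpose]

theorem Lmat_mul_self (d : ℕ) : Lmat d * Lmat d = 1 := by
  simp [Lmat, fromBlocks_multiply, fromBlocks_one]

theorem symplJ_sum_eq_fromBlocks (α : Type*) [Fintype α] [DecidableEq α] :
    symplJ (α ⊕ α) = fromBlocks (fromBlocks 0 0 0 0) (fromBlocks 1 0 0 1)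
      (fromBlocks (-1) 0 0 (-1)) (fromBlocks 0 0 0 0) := by
  rw [symplJ, fromBlocks_zero, fromBlocks_one, ← fromBlocks_one, fromBlocks_neg, neg_zero]

theorem isSymplectic_Lift {d : ℕ} {S : Matrix (I2 d) (I2 d) ℝ} (hS : IsSymplectic S) :
    IsSymplectic (Lift S) := by
  obtain ⟨a, b, c, e, rfl⟩ : ∃ a b c e, S = fromBlocks a b c e :=
    ⟨_, _, _, _, (fromBlocks_toBlocks S).symm⟩
  have hLift : Lift (fromBlocks a b c e) = fromBlocks (fromBlocks 1 0 0 a) (fromBlocks 0 0 0 b)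
      (fromBlocks 0 0 0 c) (fromBlocks 1 0 0 e) := rfl
  rw [IsSymplectic, symplJ] at hS
  rw [IsSymplectic, hLift, symplJ_sum_eq_fromBlocks]
  simpa only [fromBlocks_transpose, fromBlocks_multiply, fromBlocks_add, fromBlocks_inj,
    Matrix.mul_zero, Matrix.zero_mul, Matrix.mul_one, Matrix.mul_neg, Matrix.neg_mul,
    transpose_zero, transpose_one, add_zero, zero_add, neg_zero, true_and] using hS

theorem subE_mul_Lift {d : ℕ} (P : Matrix (I4 d) (I4 d) ℝ) (G : Matrix (I2 d) (I2 d) ℝ) :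
    subE (P * Lift G) = subE P := by
  ext i (j | j) <;>
    simp [subE, colOdd, Lift, Matrix.mul_apply, Fintype.sum_sum_type, Matrix.one_apply]

theorem subEE_mul_Lift {d : ℕ} (P : Matrix (I4 d) (I4 d) ℝ) (G : Matrix (I2 d) (I2 d) ℝ) :
    subEE (P * Lift G) = subEE P * G := by
  ext i (j | j) <;> simp [subEE, colEven, Lift, Matrix.mul_apply, Fintype.sum_sum_type]

theorem subE_fromBlocks_mul_Lmat {d : ℕ} (X Y Z : Matrix (I2 d) (I2 d) ℝ) :
    subE (fromBlocks X (X * Lmat d) Y Z) = X := by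
  ext i (j | j) <;>
    simp [subE, colOdd, Lmat, Matrix.mul_apply, Fintype.sum_sum_type, Matrix.one_apply]

theorem subEE_fromBlocks_mul_Lmat {d : ℕ} (X Y Z : Matrix (I2 d) (I2 d) ℝ) :
    subEE (fromBlocks X (X * Lmat d) Y Z) = X * Lmat d := by
  ext i (j | j) <;>
    simp [subEE, colEven, Lmat, Matrix.mul_apply, Fintype.sum_sum_type, Matrix.one_apply]

theorem alpha_blocks_general (d : ℕ) (E C S : Matrix (I2 d) (I2 d) ℝ)
    (hE : IsUnit E) (hC : C.IsSymm) (hS : IsSymplectic S)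
    (𝒜 : Matrix (I4 d) (I4 d) ℝ)
    (h𝒜 : 𝒜 = Dmat E⁻¹ * Vmat C * (Vmat (Lmat d))ᵀ * Lift S) :
    IsSymplectic 𝒜 ∧ subE 𝒜 = E ∧ subEE 𝒜 = E * Lmat d * S ∧
    IsUnit (subE 𝒜) ∧ Lmat d * (subE 𝒜)⁻¹ * subEE 𝒜 = S := by
  have hL := isSymm_Lmat d
  have hP := Dmat_inv_mul_Vmat_mul_Vmat_transpose hE C hL
  have hsubE : subE 𝒜 = E := by
    rw [h𝒜, subE_mul_Lift, hP, subE_fromBlocks_mul_Lmat]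
  have hsubEE : subEE 𝒜 = E * Lmat d * S := by
    rw [h𝒜, subEE_mul_Lift, hP, subEE_fromBlocks_mul_Lmat]
  refine ⟨?_, hsubE, hsubEE, hsubE ▸ hE, ?_⟩
  · rw [h𝒜]
    exact (((isSymplectic_Dmat (isUnit_nonsing_inv_iff.2 hE)).mul (isSymplectic_Vmat hC)).mul
      (isSymplectic_Vmat_transpose hL)).mul (isSymplectic_Lift hS)
  · calc Lmat d * (subE 𝒜)⁻¹ * subEE 𝒜 = Lmat d * (E⁻¹ * E) * Lmat d * S := by
          simp only [hsubE, hsubEE, Matrix.mul_assoc]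
      _ = S := by
          rw [nonsing_inv_mul E ((isUnit_iff_isUnit_det E).1 hE), Matrix.mul_one, Lmat_mul_self,
            Matrix.one_mul]

/-- For `E ∈ GL(2d,ℝ)`, `C ∈ Sym(2d,ℝ)`, `S ∈ Sp(d,ℝ)`, the matrix
`𝒜 = 𝒟_{E⁻¹} · V_C · V_Lᵀ · Lift(S)` is symplectic, with `E_𝒜 = E`,
`ℰ_𝒜 = E·L·S`; in particular `𝒜` is shift-invertible and `L·E_𝒜⁻¹·ℰ_𝒜 = S`. -/
theorem alpha_blocks (d : ℕ) (hd : 1 ≤ d) (E C S : Matrix (I2 d) (I2 d) ℝ)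
    (hE : IsUnit E) (hC : C.IsSymm) (hS : IsSymplectic S)
    (𝒜 : Matrix (I4 d) (I4 d) ℝ)
    (h𝒜 : 𝒜 = Dmat E⁻¹ * Vmat C * (Vmat (Lmat d))ᵀ * Lift S) :
    IsSymplectic 𝒜 ∧ subE 𝒜 = E ∧ subEE 𝒜 = E * Lmat d * S ∧
    IsUnit (subE 𝒜) ∧ Lmat d * (subE 𝒜)⁻¹ * subEE 𝒜 = S :=
  alpha_blocks_general d E C S hE hC hS 𝒜 h𝒜
end

section
/- Let 𝒜 ∈ Sp(2d,ℝ) and assume E_𝒜 is invertible. Then ℱ_𝒜 = E_𝒜^{−T} F_𝒜ᵀ ℰ_𝒜, where E_𝒜^{−T} denotes the inverse transpose of E_𝒜. -/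
open Matrix

/-! The `(odd, even)` block of `𝒜ᵀ J 𝒜` is `E_𝒜ᵀ ℱ_𝒜 - F_𝒜ᵀ ℰ_𝒜`, while the same block of `J`
vanishes. So `E_𝒜ᵀ ℱ_𝒜 = F_𝒜ᵀ ℰ_𝒜`, and it remains to cancel the invertible `E_𝒜ᵀ`. -/

section

variable {α β : Type*} [Fintype α] [DecidableEq α]

theorem transpose_mul_symplJ_mul (A : Matrix (α ⊕ α) β ℝ) :
    Aᵀ * symplJ α * A = (A.submatrix Sum.inl id)ᵀ * A.submatrix Sum.inr id
      - (A.submatrix Sum.inr id)ᵀ * A.submatrix Sum.inl id := by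
  ext i j
  simp [symplJ, mul_apply, Fintype.sum_sum_type, one_apply, sub_eq_neg_add]

theorem IsSymplectic.transpose_mul_submatrix_comm {A : Matrix (α ⊕ α) (α ⊕ α) ℝ}
    (hA : IsSymplectic A) (c₁ c₂ : β → α ⊕ α) (hJ : (symplJ α).submatrix c₁ c₂ = 0) :
    (A.submatrix Sum.inl c₁)ᵀ * A.submatrix Sum.inr c₂
      = (A.submatrix Sum.inr c₁)ᵀ * A.submatrix Sum.inl c₂ := by
  have h := congrArg (submatrix · c₁ c₂) hA
  simp only [hJ, transpose_mul_symplJ_mul, submatrix_sub] at h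
  exact sub_eq_zero.mp h

end

theorem symplJ_submatrix_colOdd_colEven (d : ℕ) :
    (symplJ (I2 d)).submatrix (colOdd d) (colEven d) = 0 := by
  ext (i | i) (j | j) <;> simp [symplJ, colOdd, colEven]

/-- If `𝒜 ∈ Sp(2d,ℝ)` and `E_𝒜` is invertible, then `ℱ_𝒜 = E_𝒜⁻ᵀ F_𝒜ᵀ ℰ_𝒜`. -/
theorem subFF_eq (d : ℕ) (𝒜 : Matrix (I4 d) (I4 d) ℝ) (h𝒜 : IsSymplectic 𝒜)
    (hE : IsUnit (subE 𝒜)) :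
    subFF 𝒜 = ((subE 𝒜)ᵀ)⁻¹ * (subF 𝒜)ᵀ * subEE 𝒜 := by
  have hblock : (subE 𝒜)ᵀ * subFF 𝒜 = (subF 𝒜)ᵀ * subEE 𝒜 :=
    h𝒜.transpose_mul_submatrix_comm _ _ (symplJ_submatrix_colOdd_colEven d)
  have hdet : IsUnit (subE 𝒜)ᵀ.det :=
    (isUnit_iff_isUnit_det _).mp ((isUnit_transpose _).mpr hE)
  rw [mul_assoc, ← hblock, nonsing_inv_mul_cancel_left _ _ hdet]
end

section
/- Let 𝒜 ∈ Sp(2d,ℝ) and assume E_𝒜 is invertible. Then ℰ_𝒜 is invertible and det(ℰ_𝒜) = (−1)^d det(E_𝒜). -/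
open Matrix

/-!
Reorder the columns of `𝒜` as (1, 3 | 2, 4): the symplectic condition becomes
`𝒲ᵀ J 𝒲 = diag(J, J)` for `𝒲 = [[E, ℰ], [F, ℱ]]`. Shearing `𝒲` on the right by
`[[I, -X], [0, I]]` with `X = E⁻¹ ℰ` clears its top-right block, and comparing lower-right blocks
gives `Xᵀ J X = -J`. Then `diag(I, -I) X` is symplectic, hence of determinant `1`, so
`det X = (-1)^d` and `ℰ = E X`.
-/

namespace Matrix

theorem transpose_submatrix_mul_mul_submatrix {m n o α : Type*} [Fintype m] [Fintype n]
    [Fintype o] [CommSemiring α] (A : Matrix m n α) (M : Matrix m m α) (e : o ≃ n) :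
    (A.submatrix id e)ᵀ * M * A.submatrix id e = (Aᵀ * M * A).submatrix e e := by
  rw [transpose_submatrix, ← submatrix_mul_equiv (Aᵀ * M) A e (Equiv.refl m) e,
    ← submatrix_mul_equiv Aᵀ M e (Equiv.refl m) (Equiv.refl m)]
  rfl

variable {R m : Type*} [CommRing R] [Fintype m] [DecidableEq m]

theorem transpose_mul_mul_eq_neg_of_gram_eq_fromBlocks {E E' F F' K : Matrix m m R}
    (hE : IsUnit E)
    (h : (fromBlocks E E' F F')ᵀ * fromBlocks 0 1 (-1) 0 * fromBlocks E E' F F' =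
      fromBlocks K 0 0 K) :
    (E⁻¹ * E')ᵀ * K * (E⁻¹ * E') = -K := by
  set X := E⁻¹ * E'
  have hEX : E * X = E' := mul_nonsing_inv_cancel_left _ _ ((isUnit_iff_isUnit_det E).mp hE)
  set T : Matrix (m ⊕ m) (m ⊕ m) R := fromBlocks 1 (-X) 0 1
  have hshear : fromBlocks E E' F F' * T = fromBlocks E 0 F (F' - F * X) := by
    simp [T, fromBlocks_multiply, hEX, sub_eq_neg_add]
  refine eq_neg_of_add_eq_zero_left ?_
  calc Xᵀ * K * X + K = (Tᵀ * fromBlocks K 0 0 K * T).toBlocks₂₂ := by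
        simp [T, fromBlocks_transpose, fromBlocks_multiply]
    _ = ((fromBlocks E E' F F' * T)ᵀ * fromBlocks 0 1 (-1) 0 *
          (fromBlocks E E' F F' * T)).toBlocks₂₂ := by
        rw [← h, transpose_mul]
        simp only [mul_assoc]
    -- a block column `[0; G]` is isotropic for `[[0, 1], [-1, 0]]`
    _ = 0 := by
        rw [hshear]
        simp [fromBlocks_transpose, fromBlocks_multiply]

theorem det_eq_neg_one_pow_of_transpose_mul_J_mul_eq_neg {X : Matrix (m ⊕ m) (m ⊕ m) R}
    (hX : Xᵀ * J m R * X = -J m R) : X.det = (-1) ^ Fintype.card m := by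
  set X₀ : Matrix (m ⊕ m) (m ⊕ m) R := fromBlocks 1 0 0 (-1)
  have hX₀ : X₀ᵀ * J m R * X₀ = -J m R := by
    simp [X₀, J, fromBlocks_transpose, fromBlocks_multiply, fromBlocks_neg]
  have hsympl : X₀ * X ∈ symplecticGroup m R := by
    rw [SymplecticGroup.mem_iff', transpose_mul]
    calc Xᵀ * X₀ᵀ * J m R * (X₀ * X) = Xᵀ * (X₀ᵀ * J m R * X₀) * X := by
          simp only [mul_assoc]
      _ = J m R := by rw [hX₀, Matrix.mul_neg, Matrix.neg_mul, hX, neg_neg]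
  have hX₀X₀ : X₀ * X₀ = 1 := by
    simp [X₀, fromBlocks_multiply]
  have hdetX₀ : X₀.det = (-1) ^ Fintype.card m := by
    simp [X₀, det_fromBlocks_zero₂₁, det_neg]
  calc X.det = (X₀ * (X₀ * X)).det := by rw [← mul_assoc, hX₀X₀, one_mul]
    _ = (-1) ^ Fintype.card m := by
      rw [det_mul, hdetX₀, SymplecticGroup.det_eq_one hsympl, mul_one]

end Matrix

theorem symplJ_eq_neg_J (l : Type*) [Fintype l] [DecidableEq l] : symplJ l = -J l ℝ := by
  simp [symplJ, J, fromBlocks_neg]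

theorem symplJ_submatrix_sumSumSumComm (l : Type*) [Fintype l] [DecidableEq l] :
    (symplJ (l ⊕ l)).submatrix (Equiv.sumSumSumComm l l l l) (Equiv.sumSumSumComm l l l l) =
      fromBlocks (symplJ l) 0 0 (symplJ l) := by
  ext (i | i) (j | j) <;> rcases i with i | i <;> rcases j with j | j <;>
    simp [symplJ, one_apply]

theorem submatrix_sumSumSumComm_eq_fromBlocks {d : ℕ} (A : Matrix (I4 d) (I4 d) ℝ) :
    A.submatrix id (Equiv.sumSumSumComm _ _ _ _) =
      fromBlocks (subE A) (subEE A) (subF A) (subFF A) := by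
  ext (i | i) (j | j) <;> rcases j with j | j <;> rfl

theorem IsSymplectic.transpose_mul_symplJ_mul_fromBlocks {d : ℕ} {A : Matrix (I4 d) (I4 d) ℝ}
    (hA : IsSymplectic A) :
    (fromBlocks (subE A) (subEE A) (subF A) (subFF A))ᵀ * symplJ (I2 d) *
      fromBlocks (subE A) (subEE A) (subF A) (subFF A) =
      fromBlocks (symplJ (Fin d)) 0 0 (symplJ (Fin d)) := by
  rw [← submatrix_sumSumSumComm_eq_fromBlocks, transpose_submatrix_mul_mul_submatrix,
    show Aᵀ * symplJ (I2 d) * A = symplJ (I2 d) from hA, symplJ_submatrix_sumSumSumComm]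

/-- If `𝒜 ∈ Sp(2d,ℝ)` and `E_𝒜` is invertible, then `ℰ_𝒜` is invertible and
`det ℰ_𝒜 = (-1)^d det E_𝒜`. -/
theorem subEE_invertible (d : ℕ) (𝒜 : Matrix (I4 d) (I4 d) ℝ) (h𝒜 : IsSymplectic 𝒜)
    (hE : IsUnit (subE 𝒜)) :
    IsUnit (subEE 𝒜) ∧ (subEE 𝒜).det = (-1) ^ d * (subE 𝒜).det := by
  set X := (subE 𝒜)⁻¹ * subEE 𝒜
  have hX : Xᵀ * J (Fin d) ℝ * X = -J (Fin d) ℝ := by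
    have := transpose_mul_mul_eq_neg_of_gram_eq_fromBlocks hE
      h𝒜.transpose_mul_symplJ_mul_fromBlocks
    rwa [symplJ_eq_neg_J, Matrix.mul_neg, Matrix.neg_mul, neg_inj] at this
  have hdetE : IsUnit (subE 𝒜).det := (isUnit_iff_isUnit_det _).mp hE
  have hdet : (subEE 𝒜).det = (-1) ^ d * (subE 𝒜).det := by
    rw [← mul_nonsing_inv_cancel_left (subE 𝒜) (subEE 𝒜) hdetE, det_mul,
      det_eq_neg_one_pow_of_transpose_mul_J_mul_eq_neg hX, Fintype.card_fin, mul_comm]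
  refine ⟨?_, hdet⟩
  rw [isUnit_iff_isUnit_det, hdet]
  exact (isUnit_one.neg.pow d).mul hdetE
end

section
/- Let 𝒜 ∈ Sp(2d,ℝ) with d×d blocks A_{ij} (1≤i,j≤4). Then the 2d×2d matrix M_𝒜 := [[A_{11}ᵀA_{31}+A_{21}ᵀA_{41}, A_{31}ᵀA_{13}+A_{41}ᵀA_{23}],[A_{13}ᵀA_{31}+A_{23}ᵀA_{41}, A_{13}ᵀA_{33}+A_{23}ᵀA_{43}]] is symmetric. -/
open Matrix

/-! With `E = subE 𝒜` and `F = subF 𝒜` (the odd block columns of the upper and lower halves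
of `𝒜`), `M_𝒜` is assembled from the blocks of `P = EᵀF`: its diagonal blocks are those of `P`
and its off-diagonal blocks are `P₂₁` and `P₂₁ᵀ`. The symplectic relation restricted to the odd
columns reads `P - Pᵀ = J`, and `J` has zero diagonal blocks, so the diagonal blocks of `P` are
symmetric. -/

theorem transpose_mul_symplJ_mul_submatrix {α β γ : Type*} [Fintype α] [DecidableEq α]
    [Fintype γ] (A : Matrix (α ⊕ α) γ ℝ) (c : β → γ) :
    (Aᵀ * symplJ α * A).submatrix c c =
      (A.submatrix Sum.inl c)ᵀ * A.submatrix Sum.inr c -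
        (A.submatrix Sum.inr c)ᵀ * A.submatrix Sum.inl c := by
  ext x y
  simp [symplJ, mul_apply, Fintype.sum_sum_type, one_apply, neg_add_eq_sub]

theorem symplJ_submatrix_colOdd (d : ℕ) :
    (symplJ (I2 d)).submatrix (colOdd d) (colOdd d) = symplJ (Fin d) := by
  ext (i | i) (j | j) <;> simp [symplJ, colOdd, one_apply]

theorem IsSymplectic.transpose_subE_mul_subF_sub {d : ℕ} {𝒜 : Matrix (I4 d) (I4 d) ℝ}
    (h𝒜 : IsSymplectic 𝒜) :
    (subE 𝒜)ᵀ * subF 𝒜 - (subF 𝒜)ᵀ * subE 𝒜 = symplJ (Fin d) := by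
  rw [← symplJ_submatrix_colOdd, ← h𝒜, transpose_mul_symplJ_mul_submatrix]
  rfl

section DiagonalBlocks

variable {α : Type*} [Fintype α] [DecidableEq α] {P : Matrix (α ⊕ α) (α ⊕ α) ℝ}

theorem isSymm_toBlocks₁₁_of_sub_transpose_eq_symplJ (hP : P - Pᵀ = symplJ α) :
    P.toBlocks₁₁.IsSymm := by
  ext i j
  simpa [symplJ, toBlocks₁₁, sub_eq_zero] using congr_fun₂ hP (Sum.inl j) (Sum.inl i)

theorem isSymm_toBlocks₂₂_of_sub_transpose_eq_symplJ (hP : P - Pᵀ = symplJ α) :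
    P.toBlocks₂₂.IsSymm := by
  ext i j
  simpa [symplJ, toBlocks₂₂, sub_eq_zero] using congr_fun₂ hP (Sum.inr j) (Sum.inr i)

end DiagonalBlocks

theorem Mmat_eq_fromBlocks {d : ℕ} (𝒜 : Matrix (I4 d) (I4 d) ℝ) :
    Mmat 𝒜 = fromBlocks ((subE 𝒜)ᵀ * subF 𝒜).toBlocks₁₁ ((subE 𝒜)ᵀ * subF 𝒜).toBlocks₂₁ᵀ
      ((subE 𝒜)ᵀ * subF 𝒜).toBlocks₂₁ ((subE 𝒜)ᵀ * subF 𝒜).toBlocks₂₂ := by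
  ext (i | i) (j | j) <;>
    simp [Mmat, blk, subE, subF, colOdd, r1, r2, r3, r4, toBlocks₁₁, toBlocks₂₁, toBlocks₂₂,
      mul_apply, Fintype.sum_sum_type, mul_comm]

/-- For `𝒜 ∈ Sp(2d,ℝ)`, the matrix `M_𝒜` is symmetric. -/
theorem Mmat_isSymm (d : ℕ) (𝒜 : Matrix (I4 d) (I4 d) ℝ) (h𝒜 : IsSymplectic 𝒜) :
    (Mmat 𝒜).IsSymm := by
  have hP : (subE 𝒜)ᵀ * subF 𝒜 - ((subE 𝒜)ᵀ * subF 𝒜)ᵀ = symplJ (Fin d) := by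
    simpa [transpose_mul] using h𝒜.transpose_subE_mul_subF_sub
  rw [Mmat_eq_fromBlocks]
  exact .fromBlocks (isSymm_toBlocks₁₁_of_sub_transpose_eq_symplJ hP) rfl
    (isSymm_toBlocks₂₂_of_sub_transpose_eq_symplJ hP)
end

section
/- Let A_ST be the 4d×4d matrix whose rows of d×d blocks are [I,−I,0,0], [0,0,I,I], [0,0,0,−I], [−I,0,0,0]. Then A_ST ∈ Sp(2d,ℝ) and E_{A_ST} = I_{2d} (so A_ST is shift-invertible), but the submatrix E of the power A_ST³ is not invertible; consequently Sp_inv(2d,ℝ) is not closed under matrix multiplication, hence not a subgroup of Sp(2d,ℝ). -/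
open Matrix

/-- The matrix `A_ST` of the short-time Fourier transform, with block rows
`[I,−I,0,0]`, `[0,0,I,I]`, `[0,0,0,−I]`, `[−I,0,0,0]`. -/
def ASTmat (d : ℕ) : Matrix (I4 d) (I4 d) ℝ :=
  fromBlocks
    (fromBlocks 1 (-1) 0 0) (fromBlocks 0 0 1 1)
    (fromBlocks 0 0 (-1) 0) (fromBlocks 0 (-1) 0 0)

lemma symp_mul {d : ℕ} {A B : Matrix (I4 d) (I4 d) ℝ}
    (hA : IsSymplectic A) (hB : IsSymplectic B) : IsSymplectic (A * B) := by
  unfold IsSymplectic at *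
  rw [transpose_mul]
  calc Bᵀ * Aᵀ * symplJ (I2 d) * (A * B)
      = Bᵀ * (Aᵀ * symplJ (I2 d) * A) * B := by noncomm_ring
    _ = symplJ (I2 d) := by rw [hA, hB]

lemma subE_blocks {d : ℕ} (a b c d' e f g h i j k l m n o p : Matrix (Fin d) (Fin d) ℝ) :
    subE (fromBlocks (fromBlocks a b c d') (fromBlocks e f g h)
      (fromBlocks i j k l) (fromBlocks m n o p)) = fromBlocks a e c g := by
  ext x y
  cases x <;> cases y <;> rfl

lemma ast_sq (d : ℕ) : ASTmat d * ASTmat d =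
    fromBlocks (fromBlocks 1 (-1) (-1) 0) (fromBlocks (-1) (-1) 0 (-1))
      (fromBlocks 1 0 (-1) 1) (fromBlocks 0 0 0 0) := by
  simp [ASTmat, Matrix.fromBlocks_multiply, Matrix.fromBlocks_add]

lemma ast_cube (d : ℕ) : ASTmat d ^ 3 =
    fromBlocks (fromBlocks 2 (-1) 0 1) (fromBlocks (-1) 0 0 0)
      (fromBlocks 1 (-1) (-1) 1) (fromBlocks 0 0 1 1) := by
  rw [pow_succ, pow_two, ast_sq]
  simp [ASTmat, Matrix.fromBlocks_multiply, Matrix.fromBlocks_add, ← Matrix.fromBlocks_one]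
  norm_num

lemma ast_symp (d : ℕ) : IsSymplectic (ASTmat d) := by
  unfold IsSymplectic symplJ ASTmat
  simp [Matrix.fromBlocks_multiply, Matrix.fromBlocks_transpose, Matrix.fromBlocks_add,
    Matrix.fromBlocks_neg, ← Matrix.fromBlocks_one]

lemma ast_subE (d : ℕ) : subE (ASTmat d) = 1 := by
  rw [ASTmat, subE_blocks, ← Matrix.fromBlocks_one]

lemma subE_sq_unit (d : ℕ) : IsUnit (subE (ASTmat d * ASTmat d)) := by
  rw [ast_sq, subE_blocks]
  refine (Matrix.isUnit_iff_isUnit_det _).mpr (Matrix.isUnit_det_of_right_inverse (B := fromBlocks 0 (-1) (-1) (-1)) ?_)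
  rw [Matrix.fromBlocks_multiply, ← Matrix.fromBlocks_one]
  norm_num

lemma subE_cube_not_unit (d : ℕ) (hd : 0 < d) : ¬ IsUnit (subE (ASTmat d ^ 3)) := by
  rw [ast_cube, subE_blocks]
  intro hu
  obtain ⟨N, hN⟩ := hu.exists_right_inv
  have := congrFun (congrFun hN (Sum.inr ⟨0, hd⟩)) (Sum.inr ⟨0, hd⟩)
  simp only [Matrix.mul_apply, Matrix.one_apply_eq] at this
  simp [Matrix.fromBlocks_apply₂₁, Matrix.fromBlocks_apply₂₂, Fintype.sum_sum_type] at this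


/-- `A_ST ∈ Sp(2d,ℝ)` with `E_{A_ST} = I`, but `E_{A_ST³}` is not invertible;
hence `Sp_inv(2d,ℝ)` is not closed under multiplication, so it is not a subgroup
of `Sp(2d,ℝ)`. -/
theorem spInv_not_subgroup (d : ℕ) (hd : 0 < d) :
    IsSymplectic (ASTmat d) ∧ subE (ASTmat d) = 1 ∧
    ¬ IsUnit (subE (ASTmat d ^ 3)) ∧
    ¬ (∀ A B : Matrix (I4 d) (I4 d) ℝ,
        (IsSymplectic A ∧ IsUnit (subE A)) → (IsSymplectic B ∧ IsUnit (subE B)) →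
        (IsSymplectic (A * B) ∧ IsUnit (subE (A * B)))) := by
  refine ⟨ast_symp d, ast_subE d, subE_cube_not_unit d hd, fun h => ?_⟩
  have h1 := h (ASTmat d) (ASTmat d * ASTmat d)
    ⟨ast_symp d, by rw [ast_subE]; exact isUnit_one⟩
    ⟨symp_mul (ast_symp d) (ast_symp d), subE_sq_unit d⟩
  have : ASTmat d * (ASTmat d * ASTmat d) = ASTmat d ^ 3 := by rw [pow_succ, pow_two, mul_assoc]
  rw [this] at h1
  exact subE_cube_not_unit d hd h1.2
end

section
/- Let 0 < p,q ≤ ∞, A,D ∈ GL(d,ℝ), B ∈ ℝ^{d×d}, and let S be the block upper triangular 2d×2d matrix S = [[A,B],[0,D]]. Then for every measurable F : ℝ^{2d} → ℂ one has ‖F∘S‖_{L^{p,q}} = |det A|^{−1/p} |det D|^{−1/q} ‖F‖_{L^{p,q}} (with the convention 1/∞ = 0). In particular, the map 𝔗_S F := |det S|^{1/2} F∘S is, up to a positive constant, a norm-preserving isomorphism of L^{p,q}(ℝ^{2d}) with inverse 𝔗_{S^{−1}}. -/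
open MeasureTheory Matrix
open scoped ENNReal

/-- Phase space `ℝ^d × ℝ^d ≅ ℝ^{2d}`. -/
abbrev PS (d : ℕ) := (Fin d → ℝ) × (Fin d → ℝ)

/-- The `L^p`-(quasi)norm of an `ℝ≥0∞`-valued function (for `0 < p ≤ ∞`). -/
noncomputable def pNormENN {α : Type*} [MeasurableSpace α] (μ : Measure α)
    (p : ℝ≥0∞) (g : α → ℝ≥0∞) : ℝ≥0∞ :=
  if p = ∞ then essSup g μ else (∫⁻ a, g a ^ p.toReal ∂μ) ^ (1 / p.toReal)

/-- The weighted mixed norm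
`‖F‖_{L^{p,q}_m} = ( ∫ ( ∫ |F(x,y)|^p m(x,y)^p dx )^{q/p} dy )^{1/q}`
(with the usual essential supremum modifications if `p = ∞` or `q = ∞`). -/
noncomputable def mixedNorm (d : ℕ) (p q : ℝ≥0∞) (m : PS d → ℝ) (F : PS d → ℂ) : ℝ≥0∞ :=
  pNormENN volume q fun y =>
    pNormENN volume p fun x => ENNReal.ofReal (m (x, y)) * (‖F (x, y)‖₊ : ℝ≥0∞)

noncomputable def affEquiv {d : ℕ} (M : Matrix (Fin d) (Fin d) ℝ) (hM : Invertible M)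
    (c : Fin d → ℝ) : (Fin d → ℝ) ≃ᵐ (Fin d → ℝ) :=
  ((M.toLinearEquiv' hM).toContinuousLinearEquiv.toHomeomorph.toMeasurableEquiv).trans
    (MeasurableEquiv.addRight c)

lemma affEquiv_apply {d : ℕ} (M : Matrix (Fin d) (Fin d) ℝ) (hM : Invertible M)
    (c : Fin d → ℝ) (x : Fin d → ℝ) : affEquiv M hM c x = M.mulVec x + c := by
  simp [affEquiv, Matrix.toLinearEquiv', MeasurableEquiv.addRight]

lemma affEquiv_map {d : ℕ} (M : Matrix (Fin d) (Fin d) ℝ) (hM : Invertible M)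
    (c : Fin d → ℝ) :
    Measure.map (affEquiv M hM c) volume = ENNReal.ofReal |M.det|⁻¹ • volume := by
  have hdet : M.det ≠ 0 := by
    have := M.isUnit_iff_isUnit_det.mp (isUnit_of_invertible M)
    simpa [isUnit_iff_ne_zero] using this
  have h1 : (⇑(affEquiv M hM c)) = (fun x => x + c) ∘ (Matrix.toLin' M) := by
    funext x; simp [affEquiv_apply, Matrix.toLin'_apply]
  rw [h1, ← Measure.map_map (measurable_add_const c) (Matrix.toLin' M).continuous_of_finiteDimensional.measurable,
    Real.map_matrix_volume_pi_eq_smul_volume_pi hdet, Measure.map_smul,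
    map_add_right_eq_self]
  simp [abs_inv]

lemma pNormENN_comp_affine {d : ℕ} (p : ℝ≥0∞) (hp : 0 < p)
    (M : Matrix (Fin d) (Fin d) ℝ) (hM : IsUnit M) (c : Fin d → ℝ)
    (g : (Fin d → ℝ) → ℝ≥0∞) :
    pNormENN volume p (fun x => g (M.mulVec x + c)) =
      ENNReal.ofReal (|M.det| ^ (-(1 / p).toReal)) * pNormENN volume p g := by
  have hdetu : IsUnit M.det := M.isUnit_iff_isUnit_det.mp hM
  have hdet : M.det ≠ 0 := by simpa [isUnit_iff_ne_zero] using hdetu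
  have hdetpos : (0:ℝ) < |M.det| := abs_pos.mpr hdet
  have hinv : Invertible M := M.invertibleOfIsUnitDet hdetu
  let e := affEquiv M hinv c
  have hmap : Measure.map e volume = ENNReal.ofReal |M.det|⁻¹ • volume :=
    affEquiv_map M hinv c
  have hcomp : (fun x => g (M.mulVec x + c)) = g ∘ e := by
    funext x; simp only [Function.comp, e, affEquiv_apply]
  rw [hcomp]
  rcases eq_or_ne p ∞ with hpt | hpt
  · subst hpt
    have h0 : (1 / (⊤:ℝ≥0∞)).toReal = 0 := by simp
    simp only [pNormENN, if_pos rfl, if_true, h0, neg_zero, Real.rpow_zero, ENNReal.ofReal_one, one_mul]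
    rw [← (MeasurableEquiv.measurableEmbedding e).essSup_map_measure, hmap,
      essSup_ennreal_smul_measure (ENNReal.ofReal_pos.mpr (inv_pos.mpr hdetpos)).ne' g]
  · have hr : 0 < p.toReal := ENNReal.toReal_pos hp.ne' hpt
    simp only [pNormENN, if_neg hpt]
    have h1 : ∫⁻ x, (g ∘ e) x ^ p.toReal ∂volume
        = ∫⁻ y, g y ^ p.toReal ∂(Measure.map e volume) :=
      (lintegral_map_equiv (fun y => g y ^ p.toReal) e).symm
    calc (∫⁻ x, (g ∘ e) x ^ p.toReal ∂volume) ^ (1 / p.toReal)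
        = (ENNReal.ofReal |M.det|⁻¹ * ∫⁻ a, g a ^ p.toReal ∂volume) ^ (1 / p.toReal) := by
          rw [h1, hmap, lintegral_smul_measure, smul_eq_mul]
      _ = ENNReal.ofReal (|M.det| ^ (-(1 / p).toReal)) *
            (∫⁻ a, g a ^ p.toReal ∂volume) ^ (1 / p.toReal) := by
          rw [ENNReal.mul_rpow_of_nonneg _ _ (by positivity)]
          congr 1
          rw [ENNReal.ofReal_rpow_of_pos (by positivity)]
          congr 1
          rw [← Real.rpow_neg_one |M.det|, ← Real.rpow_mul hdetpos.le]
          congr 1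
          simp [one_div, ENNReal.toReal_inv]

lemma pNormENN_const_mul {α : Type*} [MeasurableSpace α] (μ : Measure α) (p : ℝ≥0∞)
    (hp : 0 < p) (k : ℝ≥0∞) (hk : k ≠ ∞) (g : α → ℝ≥0∞) :
    pNormENN μ p (fun a => k * g a) = k * pNormENN μ p g := by
  rcases eq_or_ne p ∞ with hpt | hpt
  · subst hpt
    simp only [pNormENN, if_pos rfl]
    exact ENNReal.essSup_const_mul
  · have hr : 0 < p.toReal := ENNReal.toReal_pos hp.ne' hpt
    simp only [pNormENN, if_neg hpt]
    have h1 : ∀ a, (k * g a) ^ p.toReal = k ^ p.toReal * g a ^ p.toReal := fun a =>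
      ENNReal.mul_rpow_of_nonneg _ _ hr.le
    simp only [h1]
    rw [lintegral_const_mul' _ _ (ENNReal.rpow_ne_top_of_nonneg hr.le hk),
      ENNReal.mul_rpow_of_nonneg _ _ (by positivity), ← ENNReal.rpow_mul,
      mul_one_div_cancel hr.ne', ENNReal.rpow_one]

/-- For a block upper triangular matrix `S = [[A,B],[0,D]]` with `A, D` invertible,
`‖F ∘ S‖_{L^{p,q}} = |det A|^{-1/p} |det D|^{-1/q} ‖F‖_{L^{p,q}}` for every
measurable `F` (with the convention `1/∞ = 0`); in particular
`𝔗_S F = |det S|^{1/2} F ∘ S` is, up to a constant, a norm-preserving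
isomorphism of `L^{p,q}(ℝ^{2d})`. -/
theorem mixedNorm_comp_upper_triangular (d : ℕ) (p q : ℝ≥0∞) (hp : 0 < p) (hq : 0 < q)
    (A B D : Matrix (Fin d) (Fin d) ℝ) (hA : IsUnit A) (hD : IsUnit D)
    (F : PS d → ℂ) (hF : Measurable F) :
    mixedNorm d p q (fun _ => 1)
        (fun z => F (A.mulVec z.1 + B.mulVec z.2, D.mulVec z.2)) =
      ENNReal.ofReal (|A.det| ^ (-(1 / p).toReal)) *
        ENNReal.ofReal (|D.det| ^ (-(1 / q).toReal)) *
          mixedNorm d p q (fun _ => 1) F := by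
  simp only [mixedNorm, ENNReal.ofReal_one, one_mul]
  set H : (Fin d → ℝ) → ℝ≥0∞ := fun y => pNormENN volume p fun x => (‖F (x, y)‖₊ : ℝ≥0∞)
    with hH
  have hstep1 : (fun y => pNormENN volume p fun x =>
        (‖F (A.mulVec x + B.mulVec y, D.mulVec y)‖₊ : ℝ≥0∞))
      = fun y => ENNReal.ofReal (|A.det| ^ (-(1 / p).toReal)) * H (D.mulVec y) := by
    funext y
    exact pNormENN_comp_affine p hp A hA (B.mulVec y)
      (fun x => (‖F (x, D.mulVec y)‖₊ : ℝ≥0∞))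
  rw [hstep1, pNormENN_const_mul volume q hq _ ENNReal.ofReal_ne_top]
  have hstep2 : pNormENN volume q (fun y => H (D.mulVec y))
      = ENNReal.ofReal (|D.det| ^ (-(1 / q).toReal)) * pNormENN volume q H := by
    have := pNormENN_comp_affine q hq D hD 0 H
    simpa using this
  rw [hstep2, ← mul_assoc]
end
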